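/- arXiv:2003.05205 — 5 statements merged into one kernel-verified Lean document; each statement's English description precedes it below -/
import Mathlib

section
/- Let q be a prime power and let f ∈ F_q[T][X] be a polynomial that is primitive (its coefficients in F_q[T] have no common irreducible factor) and irreducible as a polynomial in X over F_q(T), with deg_T f ≥ 1. If f splits completely over F_q((T)), then deg_X f ≤ (q+1)·deg_T f. (Equivalently: every nonconstant totally T-adic algebraic function over F_q(T) has height at least 1/(q+1).) -/
open Polynomial

/-- The `T`-degree of `f ∈ F[T][X]`: the maximal `T`-degree of its coefficients
(the variable of the inner polynomial ring plays the role of `T`). -/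
noncomputable def degT {F : Type*} [Field F] (f : Polynomial (Polynomial F)) : ℕ :=
  f.support.sup fun i => (f.coeff i).natDegree

/-- View `f ∈ F[T][X]` as a polynomial in `X` over the rational function field `F(T)`. -/
noncomputable def toRat {F : Type*} [Field F] (f : Polynomial (Polynomial F)) :
    Polynomial (RatFunc F) :=
  f.map (algebraMap (Polynomial F) (RatFunc F))

/-- `f ∈ F[T][X]` splits completely (into linear factors) over the
Laurent series field `F((T))`. -/
def SplitsCompletely {F : Type*} [Field F] (f : Polynomial (Polynomial F)) : Prop :=
  Polynomial.Splits (f.map (algebraMap (Polynomial F) (LaurentSeries F)))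

/-!
Over `F((T))` write the image of `f` as `g = lc · ∏ (X - a)` and let `v` be the `T`-adic order.
The coefficients of `g` are integral, so a Newton polygon argument gives
`v lc + ∑ min (v a) 0 ≥ 0`; since `v lc ≤ deg_T f`, this bounds the roots of negative order.
For the others, evaluate at the `q` constants `c ∈ F`: each `f(c)` is a nonzero polynomial
(`f` is irreducible of `X`-degree at least `2`) of degree at most `deg_T f`, so
`∑_c v (g c) ≤ q · deg_T f`. Expanding `v (g c) = v lc + ∑_a v (c - a)`, a root of negative
order contributes `q · v a`, while a root with `v a ≥ 0` contributes at least `1`, coming from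
the constant `c` congruent to `a` modulo `T`.
-/

namespace AddValuation

variable {K Γ₀ : Type*} [Field K] [LinearOrderedAddCommGroupWithTop Γ₀]
  (v : AddValuation K Γ₀)

theorem coeff_C_mul_nonneg_of_coeff_mul_X_sub_C_nonneg {h : K[X]} {a : K} (ha : v a ≤ 0)
    (hcoeff : ∀ k, 0 ≤ v ((h * (X - C a)).coeff k)) (k : ℕ) :
    0 ≤ v ((C a * h).coeff k) := by
  have ha0 : a ≠ 0 := by
    rintro rfl
    simp at ha
  have hinv : 0 ≤ v a⁻¹ :=
    calc (0 : Γ₀) = v a⁻¹ + v a := by rw [← v.map_mul, inv_mul_cancel₀ ha0, v.map_one]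
      _ ≤ v a⁻¹ := add_le_of_nonpos_right ha
  induction k with
  | zero =>
    have := hcoeff 0
    rwa [mul_coeff_zero, coeff_sub, coeff_X_zero, coeff_C_zero, zero_sub, mul_neg,
      v.map_neg, mul_comm, ← coeff_C_mul] at this
  | succ k ih =>
    have hrec : (C a * h).coeff (k + 1)
        = a⁻¹ * (C a * h).coeff k - (h * (X - C a)).coeff (k + 1) := by
      rw [coeff_mul_X_sub_C, coeff_C_mul, coeff_C_mul, inv_mul_cancel_left₀ ha0]
      ring
    rw [hrec]
    refine v.map_le_sub ?_ (hcoeff _)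
    rw [v.map_mul]
    simpa using add_le_add hinv ih

/-- Roots of negative valuation are divided off one at a time; the others are absorbed into
the monic cofactor `Q`. -/
theorem add_sum_min_nonneg_of_coeff_nonneg (S : Multiset K) {lc : K} {Q : K[X]} (hQ : Q.Monic)
    (hcoeff : ∀ k, 0 ≤ v ((C lc * (S.map (X - C ·)).prod * Q).coeff k)) :
    0 ≤ v lc + (S.map fun a => min (v a) 0).sum := by
  induction S using Multiset.induction_on generalizing lc Q with
  | empty =>
    simpa [coeff_C_mul, hQ.coeff_natDegree] using hcoeff Q.natDegree
  | cons a S ih =>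
    simp only [Multiset.map_cons, Multiset.prod_cons, Multiset.sum_cons] at hcoeff ⊢
    rcases le_or_gt (v a) 0 with ha | ha
    · have hdiv := v.coeff_C_mul_nonneg_of_coeff_mul_X_sub_C_nonneg ha
        (h := C lc * (S.map (X - C ·)).prod * Q) fun k => by convert hcoeff k using 3; ring
      have := ih hQ (lc := a * lc) fun k => by convert hdiv k using 3; rw [C_mul]; ring
      rw [v.map_mul, add_assoc] at this
      rwa [min_eq_left ha, add_left_comm]
    · have := ih ((monic_X_sub_C a).mul hQ) (lc := lc) fun k => by
        convert hcoeff k using 3; ring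
      rwa [min_eq_right ha.le, zero_add]

end AddValuation

namespace HahnSeries

variable {Γ R : Type*} [AddCancelCommMonoid Γ] [LinearOrder Γ] [IsOrderedCancelAddMonoid Γ]
  [CommRing R] [IsDomain R]

theorem order_multiset_prod {S : Multiset R⟦Γ⟧} (hS : (0 : R⟦Γ⟧) ∉ S) :
    S.prod.order = (S.map order).sum := by
  induction S using Multiset.induction_on with
  | empty => simp [order_one]
  | cons a S ih =>
    rw [Multiset.mem_cons, not_or] at hS
    rw [Multiset.prod_cons, order_mul (Ne.symm hS.1) (Multiset.prod_ne_zero hS.2),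
      Multiset.map_cons, Multiset.sum_cons, ih hS.2]

theorem order_eval_of_splits {p : R⟦Γ⟧[X]} (hp : p.Splits) {x : R⟦Γ⟧}
    (hx : p.eval x ≠ 0) :
    (p.eval x).order = p.leadingCoeff.order + (p.roots.map fun a => (x - a).order).sum := by
  rw [hp.eval_eq_prod_roots] at hx ⊢
  have hprod := right_ne_zero_of_mul hx
  rw [order_mul (left_ne_zero_of_mul hx) hprod,
    order_multiset_prod fun h => hprod (Multiset.prod_eq_zero h), Multiset.map_map]
  rfl

theorem min_addVal_zero (x : R⟦Γ⟧) : min (addVal Γ R x) 0 = ↑(min x.order 0) := by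
  rcases eq_or_ne x 0 with rfl | hx
  · simp
  · simp [addVal_apply_of_ne hx]

end HahnSeries

namespace LaurentSeries

section Semiring

variable {R : Type*} [CommSemiring R]

theorem orderTop_algebraMap_nonneg (p : R[X]) :
    0 ≤ (algebraMap R[X] (LaurentSeries R) p).orderTop := by
  rw [HahnSeries.le_orderTop_iff_forall]
  intro j hj
  rw [algebraMap_hahnSeries_apply]
  exact (PowerSeries.coeff_coe _ j).trans (if_pos (by exact_mod_cast hj))

theorem order_algebraMap_le_natDegree {p : R[X]} (hp : p ≠ 0) :
    (algebraMap R[X] (LaurentSeries R) p).order ≤ p.natDegree := by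
  apply HahnSeries.order_le_of_coeff_ne_zero
  rw [algebraMap_hahnSeries_apply, HahnSeries.ofPowerSeries_apply_coeff, coeff_coe]
  exact leadingCoeff_ne_zero.mpr hp

theorem algebraMap_C (c : R) : algebraMap R[X] (LaurentSeries R) (C c) = HahnSeries.C c := by
  simp

end Semiring

variable {F : Type*} [Field F]

theorem order_C_sub_of_order_neg {a : LaurentSeries F} (ha : a.order < 0) (c : F) :
    (HahnSeries.C c - a).order = a.order := by
  have ha0 : a ≠ 0 := by rintro rfl; simp at ha
  have hlt : a.orderTop < (HahnSeries.C c).orderTop :=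
    calc a.orderTop = a.order := (HahnSeries.order_eq_orderTop_of_ne_zero ha0).symm
      _ < 0 := WithTop.coe_lt_coe.mpr ha
      _ ≤ (HahnSeries.C c).orderTop := by
        rw [HahnSeries.zero_le_orderTop_iff, HahnSeries.order_C]
  have hsub := HahnSeries.orderTop_sub hlt
  have hsub0 : a - HahnSeries.C c ≠ 0 := by
    rw [← HahnSeries.orderTop_ne_top, hsub]
    exact hlt.ne_top
  rw [← neg_sub, HahnSeries.order_neg]
  exact WithTop.coe_injective (by
    rw [HahnSeries.order_eq_orderTop_of_ne_zero hsub0, HahnSeries.order_eq_orderTop_of_ne_zero ha0,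
      hsub])

theorem order_C_sub_nonneg {a : LaurentSeries F} (ha : 0 ≤ a.order) (c : F) :
    0 ≤ (HahnSeries.C c - a).order := by
  rw [← HahnSeries.zero_le_orderTop_iff] at ha ⊢
  refine le_trans (le_min ?_ ha) HahnSeries.min_orderTop_le_orderTop_sub
  rw [HahnSeries.zero_le_orderTop_iff, HahnSeries.order_C]

theorem one_le_order_C_coeff_zero_sub {a : LaurentSeries F} (ha : 0 ≤ a.order)
    (hne : HahnSeries.C (a.coeff 0) - a ≠ 0) : 1 ≤ (HahnSeries.C (a.coeff 0) - a).order := by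
  rw [HahnSeries.le_order_iff_forall hne]
  intro j hj
  rcases (show j ≤ 0 by omega).lt_or_eq with hj | rfl
  · simp [hj.ne, HahnSeries.coeff_eq_zero_of_lt_order (hj.trans_le ha)]
  · simp

theorem one_add_mul_min_order_le_sum_order [Fintype F] (a : LaurentSeries F)
    (ha : ∀ c : F, HahnSeries.C c - a ≠ 0) :
    1 + (Fintype.card F + 1 : ℤ) * min a.order 0 ≤ ∑ c : F, (HahnSeries.C c - a).order := by
  rcases lt_or_ge a.order 0 with hneg | hnonneg
  · simp only [order_C_sub_of_order_neg hneg, Finset.sum_const, Finset.card_univ, nsmul_eq_mul,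
      min_eq_left hneg.le]
    linarith
  · classical
    rw [min_eq_right hnonneg, mul_zero, add_zero,
      ← Finset.add_sum_erase _ _ (Finset.mem_univ (a.coeff 0))]
    have hres := one_le_order_C_coeff_zero_sub hnonneg (ha _)
    have hrest := Finset.sum_nonneg fun c (_ : c ∈ Finset.univ.erase (a.coeff 0)) =>
      order_C_sub_nonneg hnonneg c
    linarith

theorem order_leadingCoeff_add_sum_min_nonneg_of_splits {p : (LaurentSeries F)[X]}
    (hp : p.Splits) (hp0 : p ≠ 0) (hcoeff : ∀ k, 0 ≤ (p.coeff k).orderTop) :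
    0 ≤ p.leadingCoeff.order + (p.roots.map fun a => min a.order 0).sum := by
  have := (HahnSeries.addVal ℤ F).add_sum_min_nonneg_of_coeff_nonneg p.roots monic_one
    (lc := p.leadingCoeff) (by simpa [← hp.eq_prod_roots, HahnSeries.addVal_apply] using hcoeff)
  rw [HahnSeries.addVal_apply_of_ne (leadingCoeff_ne_zero.mpr hp0)] at this
  simp only [HahnSeries.min_addVal_zero] at this
  have hcoe := map_multiset_sum (WithTop.addHom : ℤ →+ WithTop ℤ)
    (p.roots.map fun a => min a.order 0)
  rw [Multiset.map_map] at hcoe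
  change _ = (p.roots.map fun a => ((min a.order 0 : ℤ) : WithTop ℤ)).sum at hcoe
  rw [← hcoe] at this
  exact WithTop.coe_nonneg.mp this

theorem natDegree_le_of_splits [Fintype F] {p : (LaurentSeries F)[X]} (hp : p.Splits) (m : ℕ)
    (hcoeff : ∀ k, 0 ≤ (p.coeff k).orderTop) (hlc : p.leadingCoeff.order ≤ m)
    (heval : ∀ c : F, p.eval (HahnSeries.C c) ≠ 0 ∧ (p.eval (HahnSeries.C c)).order ≤ m) :
    p.natDegree ≤ (Fintype.card F + 1) * m := by
  set q : ℤ := (Fintype.card F : ℤ)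
  have hp0 : p ≠ 0 := fun h => (heval 0).1 (by simp [h])
  have hroot : ∀ a ∈ p.roots, ∀ c : F, HahnSeries.C c - a ≠ 0 := fun a ha c h =>
    (heval c).1 (by rw [sub_eq_zero.mp h]; exact isRoot_of_mem_roots ha)
  have hvalues : q * p.leadingCoeff.order
      + ∑ c : F, (p.roots.map fun a => (HahnSeries.C c - a).order).sum ≤ q * m :=
    calc _ = ∑ c : F, (p.eval (HahnSeries.C c)).order := by
          rw [Finset.sum_congr rfl fun c _ => HahnSeries.order_eval_of_splits hp (heval c).1,
            Finset.sum_add_distrib, Finset.sum_const, Finset.card_univ, nsmul_eq_mul]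
      _ ≤ ∑ _c : F, (m : ℤ) := Finset.sum_le_sum fun c _ => (heval c).2
      _ = q * m := by simp [q]
  have hroots : (p.roots.card : ℤ) + (q + 1) * (p.roots.map fun a => min a.order 0).sum
      ≤ ∑ c : F, (p.roots.map fun a => (HahnSeries.C c - a).order).sum :=
    calc _ = (p.roots.map fun a => 1 + (q + 1) * min a.order 0).sum := by
          simp [Multiset.sum_map_add, Multiset.sum_map_mul_left]
      _ ≤ (p.roots.map fun a => ∑ c : F, (HahnSeries.C c - a).order).sum :=
          Multiset.sum_map_le_sum_map _ _ fun a ha =>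
            one_add_mul_min_order_le_sum_order a (hroot a ha)
      _ = _ := Multiset.sum_map_sum_map _ _
  have hnewton := order_leadingCoeff_add_sum_min_nonneg_of_splits hp hp0 hcoeff
  have hq : 0 ≤ q := Int.natCast_nonneg _
  zify
  rw [hp.natDegree_eq_card_roots]
  -- with `L = p.leadingCoeff.order`, `M = ∑ min a.order 0` over the roots, `0 ≤ L + M`:
  -- `card ≤ q m - q (L + M) - M ≤ q m + L ≤ (q + 1) m`
  linarith [mul_nonneg hq hnewton]

end LaurentSeries

theorem Polynomial.eval_ne_zero_of_irreducible_map {R S : Type*} [CommRing R] [CommRing S]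
    [IsDomain S] {φ : R →+* S} (hφ : Function.Injective φ) {p : R[X]}
    (hirr : Irreducible (p.map φ)) (hdeg : p.natDegree ≠ 1) (r : R) : p.eval r ≠ 0 := by
  intro hr
  refine hirr.not_isRoot_of_natDegree_ne_one (by rwa [natDegree_map_eq_of_injective hφ])
    (x := φ r) ?_
  rw [IsRoot, eval_map, eval₂_at_apply, hr, map_zero]

theorem natDegree_coeff_le_degT {F : Type*} [Field F] (f : F[X][X]) (i : ℕ) :
    (f.coeff i).natDegree ≤ degT f := by
  by_cases hi : i ∈ f.support
  · exact Finset.le_sup (f := fun i => (f.coeff i).natDegree) hi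
  · simp [notMem_support_iff.mp hi]

theorem natDegree_eval_C_le_degT {F : Type*} [Field F] (f : F[X][X]) (c : F) :
    (f.eval (C c)).natDegree ≤ degT f := by
  rw [eval_eq_sum_range]
  refine natDegree_sum_le_of_forall_le _ _ fun i _ => ?_
  rw [← C_pow]
  exact (natDegree_mul_C_le _ _).trans (natDegree_coeff_le_degT f i)

theorem totallyTAdic_height_lower_bound_general {F : Type*} [Field F] [Fintype F]
    (f : Polynomial (Polynomial F))
    (hirr : Irreducible (toRat f))
    (hT : 1 ≤ degT f)
    (hsplit : SplitsCompletely f) :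
    f.natDegree ≤ (Fintype.card F + 1) * degT f := by
  rcases le_or_gt f.natDegree 1 with hle | hgt
  · nlinarith
  set φ := algebraMap F[X] (LaurentSeries F)
  have hφ : Function.Injective φ := algebraMap_hahnSeries_injective ℤ
  have hf0 : f ≠ 0 := by rintro rfl; simp at hgt
  rw [← natDegree_map_eq_of_injective hφ f]
  refine LaurentSeries.natDegree_le_of_splits hsplit _ (fun k => ?_) ?_ (fun c => ?_)
  · rw [coeff_map]
    exact LaurentSeries.orderTop_algebraMap_nonneg _
  · rw [leadingCoeff_map_of_injective hφ]
    exact (LaurentSeries.order_algebraMap_le_natDegree (leadingCoeff_ne_zero.mpr hf0)).trans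
      (by exact_mod_cast natDegree_coeff_le_degT f _)
  · have hne := eval_ne_zero_of_irreducible_map (IsFractionRing.injective F[X] (RatFunc F)) hirr
      hgt.ne' (C c)
    rw [← LaurentSeries.algebraMap_C, eval_map, eval₂_at_apply]
    exact ⟨(map_ne_zero_iff φ hφ).mpr hne,
      (LaurentSeries.order_algebraMap_le_natDegree hne).trans
        (by exact_mod_cast natDegree_eval_C_le_degT f c)⟩

/-- A nonconstant totally $T$-adic algebraic function over $F_q(T)$ has height at
least $1/(q+1)$: if $f ∈ F_q[T][X]$ is primitive, irreducible in $X$ over $F_q(T)$,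
has $\deg_T f ≥ 1$, and splits completely over $F_q((T))$, then
$\deg_X f ≤ (q+1)·\deg_T f$. -/
theorem totallyTAdic_height_lower_bound {F : Type*} [Field F] [Fintype F]
    (f : Polynomial (Polynomial F)) (hprim : f.IsPrimitive)
    (hirr : Irreducible (toRat f))
    (hT : 1 ≤ degT f)
    (hsplit : SplitsCompletely f) :
    f.natDegree ≤ (Fintype.card F + 1) * degT f :=
  totallyTAdic_height_lower_bound_general f hirr hT hsplit
end

section
/- Let q be a prime power and let L be an intermediate field of the extension F_q((T))/F_q(T) (i.e. a subfield of F_q((T)) containing the canonical image of F_q(T)). If every element of L is algebraic over F_q(T), then L is a separable extension of F_q(T). -/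
open scoped RatFunc LaurentSeries Differential
open Polynomial

/-!
The Euler operator `θ = T d/dT` is a derivation of `F⸨X⸩` that maps `F(T)` into itself, and for a
perfect field `F` of characteristic `p` every `a ∈ F(T)` with `θ a = 0` is a `p`-th power: writing
`a = P / Q` in lowest terms, `θ a = 0` gives `P' Q = P Q'`, hence `P' = Q' = 0`. If `x ∈ F⸨X⸩`
were algebraic and inseparable over `F(T)`, its minimal polynomial `m` would satisfy `m' = 0`.
Applying `θ` to `m(x) = 0` then shows that `x` is a root of the polynomial obtained by applying `θ`
to the coefficients of `m`, which has smaller degree, so it vanishes. Thus all coefficients of `m`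
are `p`-th powers, and `m(X) = g(X^p)` is itself a `p`-th power, contradicting irreducibility.
-/

namespace Derivation

variable {K L : Type*} [Field K] [CommRing L] [Nontrivial L] [Algebra K L]

noncomputable def restrict (D : Derivation ℤ L L)
    (hD : ∀ a : K, D (algebraMap K L a) ∈ Set.range (algebraMap K L)) : Derivation ℤ K K :=
  let d (a : K) : K := Function.invFun (algebraMap K L) (D (algebraMap K L a))
  have hinj := (algebraMap K L).injective
  have spec (a : K) : algebraMap K L (d a) = D (algebraMap K L a) := Function.invFun_eq (hD a)
  Derivation.mk'
    (AddMonoidHom.toIntLinearMap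
      { toFun := d
        map_zero' := hinj (by rw [spec, map_zero, D.map_zero])
        map_add' a b := hinj (by rw [spec]; simp only [map_add, spec]) })
    fun a b => hinj <| show algebraMap K L (d (a * b)) = algebraMap K L (a * d b + b * d a) by
      rw [spec]
      simp only [map_add, map_mul, spec, D.leibniz, smul_eq_mul]

theorem algebraMap_restrict (D : Derivation ℤ L L)
    (hD : ∀ a : K, D (algebraMap K L a) ∈ Set.range (algebraMap K L)) (a : K) :
    algebraMap K L (D.restrict hD a) = D (algebraMap K L a) :=
  Function.invFun_eq (hD a)

end Derivation

namespace Polynomial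

theorem exists_pow_eq_of_derivative_eq_zero {R : Type*} [CommRing R] [NoZeroDivisors R]
    (p : ℕ) [Fact p.Prime] [CharP R p] {f : R[X]} (hf : derivative f = 0)
    (hcoeff : ∀ n, ∃ b, b ^ p = f.coeff n) : ∃ g : R[X], g ^ p = f := by
  obtain ⟨g, hg⟩ : contract p f ∈ lifts (frobenius R p) :=
    lifts_iff_coeff_lifts _ |>.2 fun n => by
      simpa [coeff_contract (Fact.out : p.Prime).ne_zero, frobenius_def] using hcoeff (n * p)
  refine ⟨g, ?_⟩
  rw [← map_frobenius_expand, map_expand, ← coe_mapRingHom, hg,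
    expand_contract p hf (Fact.out : p.Prime).ne_zero]

theorem derivative_eq_zero_of_isCoprime {R : Type*} [CommSemiring R] [NoZeroDivisors R]
    {f g : R[X]} (hfg : IsCoprime f g) (h : derivative f * g = f * derivative g) :
    derivative f = 0 ∧ derivative g = 0 :=
  ⟨dvd_derivative_iff.1 (hfg.dvd_of_dvd_mul_right ⟨_, h⟩),
    dvd_derivative_iff.1 (hfg.symm.dvd_of_dvd_mul_left ⟨derivative f, by rw [← h, mul_comm]⟩)⟩

theorem Monic.degree_mapCoeffs_lt {K : Type*} [CommRing K] [Nontrivial K] [Differential K]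
    {f : K[X]} (hf : f.Monic) : (Differential.mapCoeffs f).degree < f.degree := by
  rw [degree_eq_natDegree hf.ne_zero, degree_lt_iff_coeff_zero]
  intro n hn
  rw [Differential.coeff_mapCoeffs]
  obtain rfl | hn := (show f.natDegree ≤ n by exact_mod_cast hn).eq_or_lt
  · rw [hf.coeff_natDegree, Derivation.map_one_eq_zero]
  · rw [coeff_eq_zero_of_natDegree_lt hn, map_zero]

end Polynomial

theorem IsIntegral.isSeparable_of_differential {K L : Type*} [Field K] [CommRing L] [IsDomain L]
    [Algebra K L] [Differential K] [Differential L] [DifferentialAlgebra K L]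
    (p : ℕ) [Fact p.Prime] [CharP K p] (hconst : ∀ a : K, a′ = 0 → ∃ b, b ^ p = a) {x : L}
    (hx : IsIntegral K x) : IsSeparable K x := by
  have hirr := minpoly.irreducible hx
  by_contra hsep
  have hderiv : derivative (minpoly K x) = 0 := by
    rwa [IsSeparable, separable_iff_derivative_ne_zero hirr, not_not] at hsep
  have hroot : aeval x (Differential.mapCoeffs (minpoly K x)) = 0 := by
    simpa [hderiv] using (Differential.deriv_aeval_eq x (minpoly K x)).symm
  have hmapCoeffs : Differential.mapCoeffs (minpoly K x) = 0 := by
    by_contra hne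
    exact (minpoly.degree_le_of_ne_zero K x hne hroot).not_gt
      (minpoly.monic hx).degree_mapCoeffs_lt
  obtain ⟨g, hg⟩ := exists_pow_eq_of_derivative_eq_zero p hderiv fun n =>
    hconst _ (by rw [← Differential.coeff_mapCoeffs, hmapCoeffs, coeff_zero])
  exact not_irreducible_pow (Fact.out : p.Prime).ne_one (hg ▸ hirr)

namespace LaurentSeries

open HahnSeries

section Ring

variable {R : Type*} [Ring R]

/-- The Euler operator `T d/dT`. Unlike `d/dT` it keeps every coefficient in place, so the Leibniz
rule holds termwise on each antidiagonal. -/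
def eulerOp (f : R⸨X⸩) : R⸨X⸩ :=
  ⟨fun n => n • f.coeff n,
    f.isPWO_support.mono (Function.support_smul_subset_right (fun n : ℤ => n) f.coeff)⟩

@[simp]
theorem coeff_eulerOp (f : R⸨X⸩) (n : ℤ) : (eulerOp f).coeff n = n • f.coeff n := rfl

theorem support_eulerOp_subset (f : R⸨X⸩) : (eulerOp f).support ⊆ f.support :=
  Function.support_smul_subset_right (fun n : ℤ => n) f.coeff

theorem eulerOp_mul (f g : R⸨X⸩) : eulerOp (f * g) = eulerOp f * g + f * eulerOp g := by
  ext n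
  rw [HahnSeries.coeff_add, coeff_eulerOp, HahnSeries.coeff_mul,
    coeff_mul_left' f.isPWO_support (support_eulerOp_subset f),
    coeff_mul_right' g.isPWO_support (support_eulerOp_subset g), Finset.smul_sum,
    ← Finset.sum_add_distrib]
  refine Finset.sum_congr rfl fun ij hij => ?_
  rw [← (Finset.mem_antidiagonal.1 hij).2.2, coeff_eulerOp, coeff_eulerOp, add_smul,
    smul_mul_assoc, mul_smul_comm]

end Ring

variable {R : Type*} [CommRing R]

theorem eulerOp_algebraMap (f : R[X]) :
    eulerOp (algebraMap R[X] R⸨X⸩ f) = algebraMap R[X] R⸨X⸩ (X * Polynomial.derivative f) := by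
  ext i
  rw [coeff_eulerOp, algebraMap_hahnSeries_apply, algebraMap_hahnSeries_apply,
    PowerSeries.coeff_coe, PowerSeries.coeff_coe]
  split_ifs with hi
  · rw [smul_zero]
  · obtain ⟨n, rfl⟩ := Int.eq_ofNat_of_zero_le (not_lt.1 hi)
    rw [Int.natAbs_natCast, Polynomial.coeff_coe, Polynomial.coeff_coe]
    cases n with
    | zero => simp
    | succ n => simp [coeff_derivative, mul_comm]

@[reducible]
def eulerDifferential : Differential R⸨X⸩ :=
  -- `R⸨X⸩` also carries a `ℤ`-algebra structure through `R⟦X⟧`, not defeq to the one `Differential`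
  -- is stated with.
  letI : Algebra ℤ R⸨X⸩ := Ring.toIntAlgebra _
  ⟨{  toFun := eulerOp
      map_add' f g := by ext; simp [smul_add]
      map_smul' r f := by
        ext n
        simp only [RingHom.id_apply, coeff_eulerOp, HahnSeries.coeff_smul, smul_comm n r]
      map_one_eq_zero' := by ext n; by_cases h : n = 0 <;> simp [h]
      leibniz' f g := by
        simp only [LinearMap.coe_mk, AddHom.coe_mk, eulerOp_mul, smul_eq_mul]
        ring }⟩

theorem eulerDifferential_deriv (f : R⸨X⸩) : eulerDifferential.deriv f = eulerOp f := rfl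

end LaurentSeries

namespace RatFunc

open LaurentSeries

variable {F : Type*} [Field F]

theorem coe_mul_algebraMap_denom (a : RatFunc F) :
    (a : F⸨X⸩) * algebraMap F[X] F⸨X⸩ a.denom = algebraMap F[X] F⸨X⸩ a.num := by
  rw [← num_div_denom a, algebraMap_apply_div, num_div_denom, div_mul_cancel₀]
  exact (map_ne_zero_iff _ (algebraMap_hahnSeries_injective ℤ)).2 a.denom_ne_zero

theorem eulerOp_coe_mul_denom_sq (a : RatFunc F) :
    eulerOp (a : F⸨X⸩) * algebraMap F[X] F⸨X⸩ a.denom ^ 2 =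
      algebraMap F[X] F⸨X⸩
        (Polynomial.X * (derivative a.num * a.denom - a.num * derivative a.denom)) := by
  have hmul := coe_mul_algebraMap_denom a
  have hderiv := congrArg eulerOp hmul
  rw [eulerOp_mul, eulerOp_algebraMap, eulerOp_algebraMap] at hderiv
  simp only [map_mul, map_sub] at hderiv ⊢
  linear_combination algebraMap F[X] F⸨X⸩ a.denom * hderiv -
    algebraMap F[X] F⸨X⸩ Polynomial.X * algebraMap F[X] F⸨X⸩ (derivative a.denom) * hmul

theorem eulerOp_coe_mem_range (a : RatFunc F) :
    eulerOp (a : F⸨X⸩) ∈ Set.range (algebraMap (RatFunc F) F⸨X⸩) := by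
  refine ⟨algebraMap F[X] (RatFunc F)
    (Polynomial.X * (derivative a.num * a.denom - a.num * derivative a.denom)) /
      algebraMap F[X] (RatFunc F) (a.denom ^ 2), ?_⟩
  rw [algebraMap_apply_div, map_pow, div_eq_iff, eulerOp_coe_mul_denom_sq]
  exact pow_ne_zero 2 ((map_ne_zero_iff _ (algebraMap_hahnSeries_injective ℤ)).2 a.denom_ne_zero)

theorem exists_pow_eq_of_eulerOp_coe_eq_zero (p : ℕ) [Fact p.Prime] [CharP F p] [PerfectRing F p]
    {a : RatFunc F} (ha : eulerOp (a : F⸨X⸩) = 0) : ∃ b, b ^ p = a := by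
  have hrel : derivative a.num * a.denom = a.num * derivative a.denom := by
    have h := eulerOp_coe_mul_denom_sq a
    rw [ha, zero_mul, eq_comm, map_eq_zero_iff _ (algebraMap_hahnSeries_injective ℤ), mul_eq_zero,
      sub_eq_zero] at h
    exact h.resolve_left Polynomial.X_ne_zero
  obtain ⟨hnum, hdenom⟩ := derivative_eq_zero_of_isCoprime (isCoprime_num_denom a) hrel
  have root (f : F[X]) (hf : derivative f = 0) : ∃ g, g ^ p = f :=
    exists_pow_eq_of_derivative_eq_zero p hf fun n => by
      simpa [frobenius_def] using surjective_frobenius F p (f.coeff n)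
  obtain ⟨g, hg⟩ := root _ hnum
  obtain ⟨k, hk⟩ := root _ hdenom
  exact ⟨algebraMap _ _ g / algebraMap _ _ k, by
    rw [div_pow, ← map_pow, ← map_pow, hg, hk, num_div_denom]⟩

theorem isSeparable_of_isIntegral_laurentSeries (p : ℕ) [Fact p.Prime] [CharP F p]
    [PerfectRing F p] {x : F⸨X⸩} (hx : IsIntegral (RatFunc F) x) : IsSeparable (RatFunc F) x := by
  let := LaurentSeries.eulerDifferential (R := F)
  let : Differential (RatFunc F) := ⟨Differential.deriv.restrict eulerOp_coe_mem_range⟩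
  have : DifferentialAlgebra (RatFunc F) F⸨X⸩ :=
    ⟨fun a => (Derivation.algebraMap_restrict _ _ a).symm⟩
  refine hx.isSeparable_of_differential p fun a ha => exists_pow_eq_of_eulerOp_coe_eq_zero p ?_
  rw [← eulerDifferential_deriv, deriv_algebraMap, ha, map_zero]

end RatFunc

/-- Any intermediate field `L` of `F_q((T))/F_q(T)` all of whose elements are
algebraic over `F_q(T)` is a separable extension of `F_q(T)`: every element of `L`
is separable over `F_q(T)`. -/
theorem algebraic_subfield_of_laurentSeries_isSeparable {F : Type*} [Field F] [Fintype F]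
    (L : IntermediateField (RatFunc F) (LaurentSeries F))
    (halg : ∀ x : LaurentSeries F, x ∈ L → IsAlgebraic (RatFunc F) x) :
    ∀ x : LaurentSeries F, x ∈ L → IsSeparable (RatFunc F) x := by
  intro x hx
  obtain ⟨p, _⟩ := CharP.exists F
  have : Fact p.Prime := ⟨CharP.char_is_prime F p⟩
  exact RatFunc.isSeparable_of_isIntegral_laurentSeries p (halg x hx).isIntegral
end

section
/- Let q be an odd prime power and let c ∈ F_q be a nonsquare. Then the polynomial f(X) = T·X^{q+1} + X^q − X − c·T ∈ F_q[T][X] is irreducible as a polynomial in X over F_q(T) and splits completely over F_q((T)). In particular, each of its roots is a totally T-adic function of degree q+1 and height 1/(q+1) over F_q(T). -/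
open Polynomial

/-!
Exchanging the roles of `T` and `X` turns the polynomial into `(X^{q+1} - c) T + (X^q - X)`,
which is linear in `T` with coprime coefficients: a common root `a` would lie in `F_q`
and satisfy `a² = a^{q+1} = c`. Hence it is irreducible, and by Gauss's lemma so is its image
over `F_q(T)`.

Modulo `T` the polynomial reduces to `X^q - X`, so every `a ∈ F_q` should lift to a root in
`F_q[[T]]`. The leading coefficient `T` is not a unit, so Hensel's lemma is applied instead to
the monic polynomial satisfied by `W` in `x = a + T (a² - c) / W`. This gives `q` distinct roots
of a polynomial of degree `q + 1`, which therefore splits over `F_q((T))`.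
-/

namespace FiniteField

variable {F : Type*} [Field F] [Fintype F]

theorem add_algebraMap_pow_card {A : Type*} [CommRing A] [Algebra F A] (y : A) (a : F) :
    (y + algebraMap F A a) ^ Fintype.card F = y ^ Fintype.card F + algebraMap F A a := by
  have h := expand_aeval (Fintype.card F) (X + C a) y
  rw [expand_card] at h
  simpa using h

theorem isRelPrime_X_pow_card_add_one_sub_C {c : F} (hc : ¬IsSquare c) :
    IsRelPrime (X ^ (Fintype.card F + 1) - C c) (X ^ Fintype.card F - X) := by
  intro d hdc hdX
  have hX0 := X_pow_card_sub_X_ne_zero F (Fintype.one_lt_card (α := F))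
  have hsplit : (X ^ Fintype.card F - X : F[X]).Splits := by
    rw [splits_iff_card_roots, roots_X_pow_card_sub_X,
      X_pow_card_sub_X_natDegree_eq F Fintype.one_lt_card]
    rfl
  by_contra hd
  obtain ⟨a, ha⟩ := (hsplit.of_dvd hX0 hdX).exists_eval_eq_zero
    (fun h => hd (isUnit_iff_degree_eq_zero.mpr h))
  have hac : a ^ (Fintype.card F + 1) = c := by
    simpa [sub_eq_zero] using eval_eq_zero_of_dvd_of_eval_eq_zero hdc ha
  exact hc ⟨a, by rw [← hac, pow_succ, pow_card]⟩

end FiniteField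

theorem Polynomial.splits_of_natDegree_le_card_add_one {K ι : Type*} [Field K] [Fintype ι]
    {p : K[X]} {x : ι → K} (hx : Function.Injective x) (hroot : ∀ i, p.IsRoot (x i))
    (hdeg : p.natDegree ≤ Fintype.card ι + 1) : p.Splits := by
  rcases eq_or_ne p 0 with rfl | hp
  · exact Splits.zero
  classical
  obtain ⟨g, hg⟩ := prod_multiset_X_sub_C_dvd p
  have hcard : Fintype.card ι ≤ p.roots.card :=
    calc Fintype.card ι = (Finset.univ.image x).card := by
          rw [Finset.card_image_of_injective _ hx, Finset.card_univ]
      _ ≤ p.roots.toFinset.card := Finset.card_le_card fun y hy => by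
          obtain ⟨i, -, rfl⟩ := Finset.mem_image.mp hy
          exact Multiset.mem_toFinset.mpr ((mem_roots hp).mpr (hroot i))
      _ ≤ p.roots.card := Multiset.toFinset_card_le _
  have hg0 : g ≠ 0 := by
    rintro rfl
    exact hp (by rwa [mul_zero] at hg)
  have hgdeg : g.natDegree ≤ 1 := by
    have := congrArg natDegree hg
    rw [natDegree_mul (monic_multiset_prod_of_monic _ _ fun a _ => monic_X_sub_C a).ne_zero hg0,
      natDegree_multiset_prod_X_sub_C_eq_card] at this
    omega
  rw [hg]
  refine Splits.mul (Splits.multisetProd fun q hq => ?_) (Splits.of_natDegree_le_one hgdeg)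
  obtain ⟨a, -, rfl⟩ := Multiset.mem_map.mp hq
  exact Splits.X_sub_C a

theorem degT_le_iff {F : Type*} [Field F] {f : F[X][X]} {n : ℕ} :
    degT f ≤ n ↔ ∀ i, (f.coeff i).natDegree ≤ n := by
  refine Finset.sup_le_iff.trans ⟨fun h i => ?_, fun h i _ => h i⟩
  by_cases hi : i ∈ f.support
  · exact h i hi
  · simp [notMem_support_iff.mp hi]

/-- Over `F⟦T⟧`, with `q = n + 2` and `u = a² - c`, this is the polynomial `M` such that
`x = a + T u / W` satisfies `f(x) W^{q+1} = T u M(W)`. -/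
noncomputable def minHeightPolyRev {F : Type*} [Field F] (n : ℕ) (c a : F) :
    (PowerSeries F)[X] :=
  X ^ (n + 3) + C (PowerSeries.C a * PowerSeries.X - 1) * X ^ (n + 2) +
    C ((1 + PowerSeries.C a * PowerSeries.X) * PowerSeries.X ^ (n + 1)) * X +
    C (PowerSeries.C (a * a - c) * PowerSeries.X ^ (n + 3))

theorem exists_root_minHeightPolyRev {F : Type*} [Field F] (n : ℕ) (c a : F) :
    ∃ W : PowerSeries F, PowerSeries.constantCoeff W = 1 ∧ (minHeightPolyRev n c a).IsRoot W := by
  obtain ⟨W, hW, hW1⟩ := HenselianRing.is_henselian (I := Ideal.span {PowerSeries.X})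
    (minHeightPolyRev n c a) (by unfold minHeightPolyRev; monicity!; omega) 1
    (by
      rw [Ideal.mem_span_singleton, PowerSeries.X_dvd_iff]
      simp [minHeightPolyRev])
    (by
      have h : PowerSeries.constantCoeff ((minHeightPolyRev n c a).derivative.eval 1) = 1 := by
        simp [minHeightPolyRev, derivative_pow, map_ofNat]
        ring
      exact IsUnit.map _ (PowerSeries.isUnit_iff_constantCoeff.mpr (h ▸ isUnit_one)))
  refine ⟨W, ?_, hW⟩
  rw [Ideal.mem_span_singleton, PowerSeries.X_dvd_iff, map_sub, sub_eq_zero] at hW1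
  simpa using hW1

section MinHeightPoly

variable {F : Type*} [Field F] [Fintype F]

noncomputable def minHeightPoly (c : F) : F[X][X] :=
  C X * X ^ (Fintype.card F + 1) + X ^ Fintype.card F - X - C (C c * X)

theorem coeff_minHeightPoly_card (c : F) : (minHeightPoly c).coeff (Fintype.card F) = 1 := by
  have := Fintype.one_lt_card (α := F)
  simp [minHeightPoly, coeff_X, coeff_C, this.ne]

theorem coeff_minHeightPoly_card_add_one (c : F) :
    (minHeightPoly c).coeff (Fintype.card F + 1) = X := by
  simp [minHeightPoly, coeff_X]

theorem natDegree_minHeightPoly (c : F) : (minHeightPoly c).natDegree = Fintype.card F + 1 := by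
  unfold minHeightPoly
  compute_degree!

theorem degT_minHeightPoly (c : F) : degT (minHeightPoly c) = 1 := by
  refine le_antisymm (degT_le_iff.mpr fun i => ?_) ?_
  · simp only [minHeightPoly, coeff_sub, coeff_add, coeff_C_mul, coeff_X_pow, coeff_X, coeff_C]
    split_ifs <;> compute_degree
  · have h := degT_le_iff.mp (le_refl (degT (minHeightPoly c))) (Fintype.card F + 1)
    rwa [coeff_minHeightPoly_card_add_one, natDegree_X] at h

theorem isPrimitive_minHeightPoly (c : F) : (minHeightPoly c).IsPrimitive := fun r hr =>
  isUnit_of_dvd_one (coeff_minHeightPoly_card c ▸ (C_dvd_iff_dvd_coeff r _).mp hr _)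

theorem swap_minHeightPoly (c : F) :
    Bivariate.swap (minHeightPoly c) =
      C (X ^ (Fintype.card F + 1) - C c) * X + C (X ^ Fintype.card F - X) := by
  simp [minHeightPoly, Bivariate.swap_C, Bivariate.swap_Y]
  ring

theorem irreducible_minHeightPoly {c : F} (hc : ¬IsSquare c) : Irreducible (minHeightPoly c) := by
  rw [← MulEquiv.irreducible_iff Bivariate.swap, swap_minHeightPoly]
  exact irreducible_C_mul_X_add_C (X_pow_sub_C_ne_zero (Nat.succ_pos _) c)
    (FiniteField.isRelPrime_X_pow_card_add_one_sub_C hc)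

theorem irreducible_toRat_minHeightPoly {c : F} (hc : ¬IsSquare c) :
    Irreducible (toRat (minHeightPoly c)) :=
  (isPrimitive_minHeightPoly c).irreducible_iff_irreducible_map_fraction_map.mp
    (irreducible_minHeightPoly hc)

theorem eval_map_powerSeries_minHeightPoly (c : F) (x : PowerSeries F) :
    ((minHeightPoly c).map (algebraMap F[X] (PowerSeries F))).eval x =
      PowerSeries.X * x ^ (Fintype.card F + 1) + x ^ Fintype.card F - x -
        PowerSeries.C c * PowerSeries.X := by
  simp [minHeightPoly, PowerSeries.algebraMap_apply']

theorem exists_powerSeries_root_minHeightPoly (c a : F) :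
    ∃ x : PowerSeries F, PowerSeries.constantCoeff x = a ∧
      ((minHeightPoly c).map (algebraMap F[X] (PowerSeries F))).IsRoot x := by
  obtain ⟨n, hn⟩ : ∃ n, Fintype.card F = n + 2 :=
    ⟨_, (Nat.sub_add_cancel (Fintype.one_lt_card (α := F))).symm⟩
  obtain ⟨W, hW1, hMW⟩ := exists_root_minHeightPolyRev n c a
  set T : PowerSeries F := PowerSeries.X
  set A : PowerSeries F := PowerSeries.C a
  set U : PowerSeries F := PowerSeries.C (a * a - c)
  set w := W⁻¹
  have hwW : w * W = 1 := PowerSeries.inv_mul_cancel W (by simp [hW1])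
  refine ⟨A + T * U * w, by simp [A, T], ?_⟩
  have hfrob : (A + T * U * w) ^ Fintype.card F =
      A + T ^ Fintype.card F * U * w ^ Fintype.card F := by
    have h := FiniteField.add_algebraMap_pow_card (T * U * w) a
    rw [PowerSeries.algebraMap_eq] at h
    rw [add_comm, h, mul_pow, mul_pow, ← map_pow, FiniteField.pow_card]
    ring
  rw [IsRoot, eval_map_powerSeries_minHeightPoly, pow_succ, hfrob, hn]
  have key : (T * ((A + T ^ (n + 2) * U * w ^ (n + 2)) * (A + T * U * w)) +
      (A + T ^ (n + 2) * U * w ^ (n + 2)) - (A + T * U * w) - PowerSeries.C c * T) *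
        W ^ (n + 3) = T * U * (minHeightPolyRev n c a).eval W := by
    have hU : U = A ^ 2 - PowerSeries.C c := by simp [U, A, sq]
    have h2 : (w * W) ^ (n + 2) = 1 := by rw [hwW, one_pow]
    have h3 : (w * W) ^ (n + 3) = 1 := by rw [hwW, one_pow]
    simp only [minHeightPolyRev, eval_add, eval_mul, eval_pow, eval_C, eval_X]
    linear_combination (-T * W ^ (n + 3)) * hU + (T ^ 2 * A * U - T * U) * W ^ (n + 2) * hwW +
      (T ^ (n + 2) * U * W + T ^ (n + 3) * A * U * W) * h2 + T ^ (n + 4) * U ^ 2 * h3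
  rw [hMW.eq_zero, mul_zero] at key
  exact (mul_eq_zero.mp key).resolve_right (pow_ne_zero _ fun h => by simp [h] at hW1)

theorem splitsCompletely_minHeightPoly (c : F) : SplitsCompletely (minHeightPoly c) := by
  choose x hx0 hxroot using exists_powerSeries_root_minHeightPoly c
  set ι := algebraMap (PowerSeries F) (LaurentSeries F)
  have hι : Function.Injective ι := by
    rw [LaurentSeries.coe_algebraMap]
    exact HahnSeries.ofPowerSeries_injective
  have hmap : (minHeightPoly c).map (algebraMap F[X] (LaurentSeries F)) =
      ((minHeightPoly c).map (algebraMap F[X] (PowerSeries F))).map ι := by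
    rw [map_map]
    rfl
  rw [SplitsCompletely, hmap]
  refine splits_of_natDegree_le_card_add_one (x := fun a => ι (x a))
    (fun a b hab => by rw [← hx0 a, ← hx0 b, hι hab]) (fun a => (hxroot a).map) ?_
  exact natDegree_map_le.trans (natDegree_map_le.trans (natDegree_minHeightPoly c).le)

end MinHeightPoly

theorem min_height_example_odd_general {F : Type*} [Field F] [Fintype F]
    (c : F) (hc : ¬ IsSquare c)
    (f : Polynomial (Polynomial F))
    (hf : f = Polynomial.C Polynomial.X * Polynomial.X ^ (Fintype.card F + 1)
        + Polynomial.X ^ Fintype.card F - Polynomial.X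
        - Polynomial.C (Polynomial.C c * Polynomial.X)) :
    Irreducible (toRat f) ∧ SplitsCompletely f ∧
      f.natDegree = Fintype.card F + 1 ∧ degT f = 1 := by
  subst hf
  exact ⟨irreducible_toRat_minHeightPoly hc, splitsCompletely_minHeightPoly c,
    natDegree_minHeightPoly c, degT_minHeightPoly c⟩

/-- For $q$ odd and $c ∈ F_q$ a nonsquare, the polynomial
$f = T·X^{q+1} + X^q - X - c·T$ is irreducible over $F_q(T)$ and splits completely
over $F_q((T))$; its roots are totally $T$-adic of degree $q+1$ and height
$1/(q+1)$. -/
theorem min_height_example_odd {F : Type*} [Field F] [Fintype F]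
    (hodd : Odd (Fintype.card F))
    (c : F) (hc : ¬ IsSquare c)
    (f : Polynomial (Polynomial F))
    (hf : f = Polynomial.C Polynomial.X * Polynomial.X ^ (Fintype.card F + 1)
        + Polynomial.X ^ Fintype.card F - Polynomial.X
        - Polynomial.C (Polynomial.C c * Polynomial.X)) :
    Irreducible (toRat f) ∧ SplitsCompletely f ∧
      f.natDegree = Fintype.card F + 1 ∧ degT f = 1 :=
  min_height_example_odd_general c hc f hf
end

section
/- Let n ≥ 1 be an integer, let q be a prime power with q ≡ 1 (mod n), and let K be an algebraic closure of F_q. Then the polynomial Y^n − (X^n·(X^q − X)^n + 1), viewed as a polynomial in Y over the field K(X) (equivalently, as an element of K[X,Y]), is irreducible. (Geometrically: the affine curve y^n = x^n(x^q − x)^n + 1 over F_q is geometrically irreducible.) -/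
/-!
Write `c = H ^ n + 1` with `H = X (X ^ q - X)`, so that the polynomial is `Y ^ n - c`. It is
Eisenstein at `X - α` for any simple root `α` of `c`, and Gauss's lemma carries irreducibility
over to `K(X)`. If `c` had no simple root, then `c ∣ c' ^ 2` over the algebraically closed `K`;
since `c' = n H ^ (n - 1) H'` with `n ≠ 0` in `K` (as `n ∣ q - 1`) and `c` is coprime to `H`,
this forces `c ∣ H' ^ 2 = (X ^ q - 2 X) ^ 2`, which is impossible by degrees once `n ≥ 2`.
-/

open Polynomial

theorem isEisensteinAt_X_pow_sub_C {R : Type*} [CommRing R] {P : Ideal R} (hP : P ≠ ⊤)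
    {c : R} (hc : c ∈ P) (hc2 : c ∉ P ^ 2) {n : ℕ} (hn : n ≠ 0) :
    (X ^ n - C c).IsEisensteinAt P := by
  have : Nontrivial R := ⟨0, 1, fun h => hP ((Ideal.eq_top_iff_one P).mpr (h ▸ P.zero_mem))⟩
  refine (monic_X_pow_sub_C c hn).isEisensteinAt_of_mem_of_notMem hP (fun {m} hm => ?_) ?_
  · rw [natDegree_X_pow_sub_C] at hm
    rw [coeff_sub, coeff_X_pow, if_neg hm.ne, coeff_C]
    split_ifs <;> simp [hc]
  · simpa [coeff_sub, coeff_X_pow, Ne.symm hn] using hc2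

theorem irreducible_map_X_pow_sub_C_of_mem_of_notMem (K : Type*) {R : Type*} [CommRing R]
    [IsDomain R] [IsIntegrallyClosed R] [Field K] [Algebra R K] [IsFractionRing R K]
    {P : Ideal R} (hP : P.IsPrime) {c : R} (hc : c ∈ P) (hc2 : c ∉ P ^ 2) {n : ℕ} (hn : n ≠ 0) :
    Irreducible ((X ^ n - C c).map (algebraMap R K)) := by
  have hmon : (X ^ n - C c).Monic := monic_X_pow_sub_C c hn
  refine hmon.irreducible_iff_irreducible_map_fraction_map.mp ?_
  exact (isEisensteinAt_X_pow_sub_C hP.ne_top hc hc2 hn).irreducible hP hmon.isPrimitive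
    (by rw [natDegree_X_pow_sub_C]; exact Nat.pos_of_ne_zero hn)

theorem mem_span_X_sub_C_and_notMem_sq_of_rootMultiplicity_eq_one {R : Type*} [CommRing R]
    {c : R[X]} {α : R} (h : c.rootMultiplicity α = 1) :
    c ∈ Ideal.span {X - C α} ∧ c ∉ Ideal.span {X - C α} ^ 2 := by
  have hc : c ≠ 0 := by rintro rfl; simp at h
  rw [Ideal.span_singleton_pow, Ideal.mem_span_singleton, Ideal.mem_span_singleton,
    ← pow_one (X - C α), ← pow_mul, ← le_rootMultiplicity_iff hc, ← le_rootMultiplicity_iff hc, h]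
  simp

theorem dvd_derivative_sq_of_forall_isRoot_derivative {K : Type*} [Field K] [IsAlgClosed K]
    {c : K[X]} (h : ∀ α, c.IsRoot α → c.derivative.IsRoot α) : c ∣ c.derivative ^ 2 := by
  classical
  by_cases hc' : c.derivative = 0
  · simp [hc']
  have hc : c ≠ 0 := by rintro rfl; simp at hc'
  refine (IsAlgClosed.splits c).dvd_of_roots_le_roots hc (Multiset.le_iff_count.mpr fun α => ?_)
  rw [roots_pow, Multiset.count_nsmul, count_roots, count_roots]
  by_cases hα : c.IsRoot α
  · have h1 := rootMultiplicity_sub_one_le_derivative_rootMultiplicity_of_ne_zero c α hc'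
    have h2 := (rootMultiplicity_pos hc').mpr (h α hα)
    omega
  · simp [rootMultiplicity_eq_zero hα]

theorem exists_rootMultiplicity_pow_add_one_eq_one {K : Type*} [Field K] [IsAlgClosed K]
    {H : K[X]} {n : ℕ} (hn : 2 ≤ n) (hnK : (n : K) ≠ 0) (hH' : derivative H ≠ 0)
    (hdeg : (derivative H).natDegree < H.natDegree) :
    ∃ α, (H ^ n + 1).rootMultiplicity α = 1 := by
  set c := H ^ n + 1
  have hcdeg : c.natDegree = n * H.natDegree := by
    rw [show c = H ^ n + C 1 by simp [c], natDegree_add_C, natDegree_pow]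
  have hc : c ≠ 0 :=
    ne_zero_of_natDegree_gt (n := 0) (by rw [hcdeg]; exact Nat.mul_pos (by omega) (by omega))
  by_contra! hsimple
  have hmultiple : ∀ α, c.IsRoot α → c.derivative.IsRoot α := fun α hα =>
    ((one_lt_rootMultiplicity_iff_isRoot hc).mp (lt_of_le_of_ne
      ((rootMultiplicity_pos hc).mpr hα) (hsimple α).symm)).2
  have hcop : IsCoprime c (C (n : K) * H ^ (n - 1)) := by
    refine (isCoprime_mul_unit_left_right (isUnit_C.mpr hnK.isUnit) _ _).mpr
      (IsCoprime.pow_right ⟨1, -H ^ (n - 1), ?_⟩)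
    obtain ⟨m, rfl⟩ := Nat.exists_eq_add_of_le' (by omega : 1 ≤ n)
    simp only [c, Nat.add_sub_cancel]
    ring
  have hdvd : c ∣ derivative H ^ 2 := by
    have := dvd_derivative_sq_of_forall_isRoot_derivative hmultiple
    rw [derivative_add, derivative_one, add_zero, derivative_pow, mul_pow] at this
    exact (hcop.pow_right).dvd_of_dvd_mul_left this
  have hle := natDegree_le_of_dvd hdvd (pow_ne_zero 2 hH')
  rw [hcdeg, natDegree_pow] at hle
  nlinarith

theorem derivative_X_mul_X_pow_sub_X {R : Type*} [CommRing R] {q : ℕ} (hqR : (q : R) = 0) :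
    derivative (X * (X ^ q - X) : R[X]) = X ^ q - C 2 * X := by
  rw [derivative_mul, derivative_sub, derivative_X_pow, hqR, derivative_X, C_0, C_ofNat]
  ring

theorem natDegree_X_mul_X_pow_sub_X {R : Type*} [CommRing R] [Nontrivial R] {q : ℕ}
    (hq : 2 ≤ q) : (X * (X ^ q - X) : R[X]).natDegree = q + 1 := by
  rw [mul_sub, ← pow_succ', ← sq, natDegree_sub_eq_left_of_natDegree_lt] <;>
    simp only [natDegree_X_pow]; omega

theorem natDegree_X_pow_sub_C_mul_X {R : Type*} [CommRing R] [Nontrivial R] {q : ℕ}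
    (hq : 2 ≤ q) (a : R) : (X ^ q - C a * X : R[X]).natDegree = q := by
  rw [natDegree_sub_eq_left_of_natDegree_lt] <;> simp only [natDegree_X_pow]
  exact (natDegree_C_mul_le a X).trans_lt (by rw [natDegree_X]; omega)

theorem FiniteField.natCast_ne_zero_of_dvd_card_sub_one {F : Type*} [Field F] [Fintype F]
    {n : ℕ} (h : n ∣ Fintype.card F - 1) : (n : F) ≠ 0 := by
  obtain ⟨k, hk⟩ := h
  have hq : ((Fintype.card F - 1 : ℕ) : F) = -1 := by
    rw [Nat.cast_sub Fintype.card_pos, FiniteField.cast_card_eq_zero, Nat.cast_one, zero_sub]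
  intro hn
  rw [hk, Nat.cast_mul, hn, zero_mul] at hq
  exact one_ne_zero (neg_eq_zero.mp hq.symm)

/-- For $n ≥ 1$ and $q ≡ 1 \pmod n$, the polynomial $Y^n - (X^n(X^q - X)^n + 1)$,
viewed as a polynomial in $Y$ over $K(X)$ for $K$ an algebraic closure of $F_q$,
is irreducible: the curve $y^n = x^n(x^q-x)^n + 1$ is geometrically irreducible. -/
theorem cyclic_cover_geometrically_irreducible {F : Type*} [Field F] [Fintype F]
    (n : ℕ) (hn : 1 ≤ n) (hmod : n ∣ Fintype.card F - 1)
    (K : Type*) [Field K] [Algebra F K] [IsAlgClosure F K]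
    (g : Polynomial (Polynomial K))
    (hg : g = Polynomial.X ^ n -
        Polynomial.C (Polynomial.X ^ n *
          (Polynomial.X ^ Fintype.card F - Polynomial.X) ^ n + 1)) :
    Irreducible (g.map (algebraMap (Polynomial K) (RatFunc K))) := by
  have : IsAlgClosed K := IsAlgClosure.isAlgClosed F
  set q := Fintype.card F
  rw [hg, ← mul_pow]
  obtain rfl | hn2 := hn.eq_or_lt
  · rw [pow_one, Polynomial.map_sub, map_X, map_C]
    exact irreducible_X_sub_C _
  have hq : 2 ≤ q := Fintype.one_lt_card
  have hqK : (q : K) = 0 := by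
    rw [← map_natCast (algebraMap F K), FiniteField.cast_card_eq_zero, map_zero]
  have hnK : (n : K) ≠ 0 := by
    rw [← map_natCast (algebraMap F K)]
    exact (_root_.map_ne_zero _).mpr (FiniteField.natCast_ne_zero_of_dvd_card_sub_one hmod)
  have hH' := derivative_X_mul_X_pow_sub_X hqK
  have hdeg' := natDegree_X_pow_sub_C_mul_X hq (2 : K)
  obtain ⟨α, hα⟩ := exists_rootMultiplicity_pow_add_one_eq_one hn2 hnK
    (by rw [hH']; exact ne_zero_of_natDegree_gt (n := 0) (by rw [hdeg']; omega))
    (by rw [hH', hdeg', natDegree_X_mul_X_pow_sub_X hq]; omega)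
  obtain ⟨hmem, hnotMem⟩ := mem_span_X_sub_C_and_notMem_sq_of_rootMultiplicity_eq_one hα
  exact irreducible_map_X_pow_sub_C_of_mem_of_notMem (RatFunc K)
    ((Ideal.span_singleton_prime (X_sub_C_ne_zero α)).mpr (prime_X_sub_C α)) hmem hnotMem
    (by omega)
end

section
/- Let n ≥ 1 be an integer and let q be a prime power with q ≡ 1 (mod n) such that q is neither a power of 3 nor a power of 5. Then the polynomials X^{2n} + 1 and X^{q−1} − 2 are coprime in F_q[X]; equivalently, there is no element ρ in an algebraic closure of F_q with ρ^{2n} = −1 and ρ^{q−1} = 2. (Consequently the curve y^n = x^n(x^q − x)^n + 1 over F_q is nonsingular.) -/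
/-!
Both polynomials divide a power of `X ^ (q - 1)` minus a constant: since `2n ∣ 2(q - 1)`,
`X ^ (2n) + 1 ∣ X ^ (4(q - 1)) - 1`, while `X ^ (q - 1) - 2 ∣ X ^ (4(q - 1)) - 16`.
The difference of these two multiples is the constant `15`, a unit as soon as the
characteristic is neither 3 nor 5.
-/

open Polynomial

theorem isCoprime_of_isUnit_sub {R : Type*} [CommRing R] {x y : R} (h : IsUnit (x - y)) :
    IsCoprime x y := by
  obtain ⟨u, hu⟩ := h.exists_left_inv
  exact ⟨u, -u, by rw [← hu]; ring⟩

theorem pow_add_one_dvd_pow_sub_one {R : Type*} [CommRing R] (x : R) {n m : ℕ} (h : n ∣ m) :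
    x ^ (2 * n) + 1 ∣ x ^ (4 * m) - 1 := by
  obtain ⟨k, rfl⟩ := h
  have hsq : x ^ (2 * n) + 1 ∣ x ^ (4 * n) - 1 :=
    ⟨x ^ (2 * n) - 1, by rw [show 4 * n = 2 * n + 2 * n by ring, pow_add]; ring⟩
  refine hsq.trans ?_
  simpa [← pow_mul, mul_assoc] using sub_dvd_pow_sub_pow (x ^ (4 * n)) 1 k

theorem FiniteField.natCast_ne_zero_of_card_ne_pow {F : Type*} [Field F] [Fintype F] {m : ℕ}
    (h : ∀ p, p.Prime → p ∣ m → ∀ k, Fintype.card F ≠ p ^ k) : (m : F) ≠ 0 := by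
  obtain ⟨p, hchar, k, hp, hcard⟩ := FiniteField.card' F
  intro hzero
  exact h p hp ((CharP.cast_eq_zero_iff F p m).mp hzero) k hcard

theorem Nat.Prime.eq_three_or_eq_five_of_dvd_fifteen {p : ℕ} (hp : p.Prime) (h : p ∣ 15) :
    p = 3 ∨ p = 5 := by
  rcases (Nat.Prime.dvd_mul hp).mp (show p ∣ 3 * 5 from h) with h3 | h5
  · exact .inl ((Nat.prime_dvd_prime_iff_eq hp Nat.prime_three).mp h3)
  · exact .inr ((Nat.prime_dvd_prime_iff_eq hp Nat.prime_five).mp h5)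

theorem cyclic_cover_nonsingular_general {F : Type*} [Field F] [Fintype F]
    (n : ℕ) (hmod : n ∣ Fintype.card F - 1)
    (h3 : ∀ k : ℕ, Fintype.card F ≠ 3 ^ k)
    (h5 : ∀ k : ℕ, Fintype.card F ≠ 5 ^ k) :
    IsCoprime (Polynomial.X ^ (2 * n) + 1 : Polynomial F)
      (Polynomial.X ^ (Fintype.card F - 1) - Polynomial.C 2) := by
  set q := Fintype.card F
  have h15 : (15 : F) ≠ 0 := by
    refine FiniteField.natCast_ne_zero_of_card_ne_pow (m := 15) fun p hp hdvd => ?_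
    rcases hp.eq_three_or_eq_five_of_dvd_fifteen hdvd with rfl | rfl
    exacts [h3, h5]
  have hdvd : (X ^ (q - 1) - C 2 : F[X]) ∣ X ^ (4 * (q - 1)) - C 2 ^ 4 := by
    simpa [← pow_mul, mul_comm] using sub_dvd_pow_sub_pow (X ^ (q - 1) : F[X]) (C 2) 4
  have hsub : (X ^ (4 * (q - 1)) - 1 : F[X]) - (X ^ (4 * (q - 1)) - C 2 ^ 4) = C 15 := by
    rw [sub_sub_sub_cancel_left, ← C_pow, ← C_1, ← C_sub]; norm_num
  exact IsCoprime.mono (pow_add_one_dvd_pow_sub_one X hmod) hdvd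
    (isCoprime_of_isUnit_sub (hsub ▸ isUnit_C.mpr h15.isUnit))

/-- If $q ≡ 1 \pmod n$ and $q$ is neither a power of 3 nor a power of 5, then
$X^{2n} + 1$ and $X^{q-1} - 2$ are coprime in $F_q[X]$ (so the curve
$y^n = x^n(x^q-x)^n + 1$ is nonsingular). -/
theorem cyclic_cover_nonsingular {F : Type*} [Field F] [Fintype F]
    (n : ℕ) (hn : 1 ≤ n) (hmod : n ∣ Fintype.card F - 1)
    (h3 : ∀ k : ℕ, Fintype.card F ≠ 3 ^ k)
    (h5 : ∀ k : ℕ, Fintype.card F ≠ 5 ^ k) :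
    IsCoprime (Polynomial.X ^ (2 * n) + 1 : Polynomial F)
      (Polynomial.X ^ (Fintype.card F - 1) - Polynomial.C 2) :=
  cyclic_cover_nonsingular_general n hmod h3 h5
end
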